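/- arXiv:2602.21056 — 2 statements merged into one kernel-verified Lean document; each statement's English description precedes it below -/
import Mathlib

section
/- Let A = (a_{jk}) and B = (b_{jk}) be positive semidefinite N×N complex matrices. Then det(A ⋄ B) ≥ b_{00}^N · det A, where ⋄ denotes the Jury product. Moreover, if B has rank 1, then equality holds: det(A ⋄ B) = b_{00}^N · det A. -/
/-!
Write `B = ∑ᵣ uᵣ uᵣ*` (spectral decomposition). The Jury product is linear in `B`, and
`A ⋄ (u u*) = T_u A T_u*` with `T_u` the lower triangular Toeplitz matrix with first column `u`,
so `det (A ⋄ u u*) = |u₀|^(2N) det A`. By Minkowski's determinant inequality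
`det (∑ Mᵣ)^(1/N) ≥ ∑ det (Mᵣ)^(1/N)` for positive semidefinite `Mᵣ`, hence
`det (A ⋄ B)^(1/N) ≥ (∑ᵣ |uᵣ₀|²) det (A)^(1/N) = b₀₀ det (A)^(1/N)`.
When `B` has rank one there is a single summand and equality holds.
-/

open Finset ComplexOrder

/-- The Jury product of two `N × N` complex matrices (indices `0, …, N-1`):
`(A ⋄ B)_{jk} = ∑_{m=0}^{j} ∑_{n=0}^{k} a_{m,n} b_{j-m,k-n}`. -/
noncomputable def jury {N : ℕ} (A B : Matrix (Fin N) (Fin N) ℂ) :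
    Matrix (Fin N) (Fin N) ℂ :=
  Matrix.of fun j k => ∑ m ∈ Finset.Iic j, ∑ n ∈ Finset.Iic k, A m n * B (j - m) (k - n)

-- AM-GM for the fractions `xᵢ / (1 + xᵢ)` and `1 / (1 + xᵢ)`, whose arithmetic means add up to `1`.
theorem Real.one_add_geom_mean_le_geom_mean_one_add {ι : Type*} [Fintype ι] [Nonempty ι]
    {x : ι → ℝ} (hx : ∀ i, 0 ≤ x i) :
    1 + (∏ i, x i) ^ (Fintype.card ι : ℝ)⁻¹ ≤ (∏ i, (1 + x i)) ^ (Fintype.card ι : ℝ)⁻¹ := by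
  set w : ℝ := (Fintype.card ι : ℝ)⁻¹
  have hpos : ∀ i, 0 < 1 + x i := fun i => by linarith [hx i]
  have hw : ∑ _i : ι, w = 1 := by simp [w]
  have amgm : ∀ c : ι → ℝ, (∀ i, 0 ≤ c i) →
      (∏ i, c i) ^ w / (∏ i, (1 + x i)) ^ w ≤ ∑ i, w * (c i / (1 + x i)) := fun c hc => by
    have hfrac : ∀ i ∈ univ, 0 ≤ c i / (1 + x i) := fun i _ => div_nonneg (hc i) (hpos i).le
    rw [← Real.div_rpow (prod_nonneg fun i _ => hc i) (prod_nonneg fun i _ => (hpos i).le),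
      ← prod_div_distrib, ← Real.finsetProd_rpow _ _ hfrac]
    exact Real.geom_mean_le_arith_mean_weighted _ _ _ (fun _ _ => by positivity) hw hfrac
  have hsum : ∑ i, w * (x i / (1 + x i)) + ∑ i, w * (1 / (1 + x i)) = 1 := by
    rw [← sum_add_distrib]
    refine (sum_congr rfl fun i _ => ?_).trans hw
    rw [← mul_add, ← add_div, add_comm (x i), div_self (hpos i).ne', mul_one]
  have h := add_le_add (amgm x hx) (amgm (fun _ => 1) fun _ => zero_le_one)
  rw [hsum, prod_const_one, Real.one_rpow, ← add_div,
    div_le_one (Real.rpow_pos_of_pos (prod_pos fun i _ => hpos i) _)] at h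
  linarith

namespace Matrix

variable {𝕜 n : Type*} [RCLike 𝕜]

theorem ofReal_smul_vecMulVec_self_star {x : ℝ} (hx : 0 ≤ x) (v : n → 𝕜) :
    (x : 𝕜) • vecMulVec v (star v) = vecMulVec ((√x : 𝕜) • v) (star ((√x : 𝕜) • v)) := by
  rw [star_smul, RCLike.star_def, RCLike.conj_ofReal, smul_vecMulVec, vecMulVec_smul, smul_smul,
    ← RCLike.ofReal_mul, Real.mul_self_sqrt hx]

variable [Fintype n] [DecidableEq n]

theorem PosSemidef.re_det_nonneg {M : Matrix n n 𝕜} (hM : M.PosSemidef) :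
    0 ≤ RCLike.re M.det :=
  (RCLike.nonneg_iff.mp hM.det_nonneg).1

theorem re_det_conjTranspose_mul_mul (S X : Matrix n n 𝕜) :
    RCLike.re (Sᴴ * X * S).det = ‖S.det‖ ^ 2 * RCLike.re X.det := by
  rw [det_mul, det_mul, det_conjTranspose, mul_right_comm, RCLike.star_def, RCLike.conj_mul,
    ← RCLike.ofReal_pow, RCLike.re_ofReal_mul]

theorem PosSemidef.one_add_re_det_rpow_le [Nonempty n] {Q : Matrix n n 𝕜} (hQ : Q.PosSemidef) :
    1 + RCLike.re Q.det ^ (Fintype.card n : ℝ)⁻¹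
      ≤ RCLike.re (1 + Q).det ^ (Fintype.card n : ℝ)⁻¹ := by
  have hdet : (1 + Q).det = ∏ i, ((1 + hQ.1.eigenvalues i : ℝ) : 𝕜) := by
    conv_lhs => rw [hQ.1.spectral_theorem, ← map_one (Unitary.conjStarAlgAut 𝕜 _ _), ← map_add,
      det_map', ← diagonal_one, diagonal_add, det_diagonal]
    simp
  rw [hdet, hQ.1.det_eq_prod_eigenvalues, ← RCLike.ofReal_prod, ← RCLike.ofReal_prod,
    RCLike.ofReal_re, RCLike.ofReal_re]
  exact Real.one_add_geom_mean_le_geom_mean_one_add hQ.eigenvalues_nonneg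

open scoped MatrixOrder in
/-- Writing `P = Sᴴ S` and `M = Sᴴ Q S` reduces the inequality to the case `P = 1`. -/
theorem PosSemidef.re_det_rpow_add_le_of_posDef [Nonempty n] {M P : Matrix n n 𝕜}
    (hM : M.PosSemidef) (hP : P.PosDef) :
    RCLike.re M.det ^ (Fintype.card n : ℝ)⁻¹ + RCLike.re P.det ^ (Fintype.card n : ℝ)⁻¹
      ≤ RCLike.re (M + P).det ^ (Fintype.card n : ℝ)⁻¹ := by
  obtain ⟨S, rfl⟩ := CStarAlgebra.nonneg_iff_eq_star_mul_self.mp hP.posSemidef.nonneg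
  rw [star_eq_conjTranspose] at hP ⊢
  have hS : IsUnit S.det := by
    have hdet := hP.det_pos.ne'
    rw [det_mul] at hdet
    exact (right_ne_zero_of_mul hdet).isUnit
  set Q := (S⁻¹)ᴴ * M * S⁻¹
  have hQ : Q.PosSemidef := hM.conjTranspose_mul_mul_same _
  have hMQ : M = Sᴴ * Q * S := by
    simp only [Q, ← mul_assoc, ← conjTranspose_mul, nonsing_inv_mul _ hS, conjTranspose_one,
      one_mul]
    rw [mul_assoc, nonsing_inv_mul _ hS, mul_one]
  have hMP : M + Sᴴ * S = Sᴴ * (1 + Q) * S := by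
    rw [hMQ]
    noncomm_ring
  have hdetM : RCLike.re M.det = ‖S.det‖ ^ 2 * RCLike.re Q.det := by
    rw [hMQ, re_det_conjTranspose_mul_mul]
  have hdetP : RCLike.re (Sᴴ * S).det = ‖S.det‖ ^ 2 := by
    simpa using re_det_conjTranspose_mul_mul S 1
  have ha : 0 ≤ ‖S.det‖ ^ 2 := by positivity
  rw [hMP, re_det_conjTranspose_mul_mul, hdetM, hdetP, Real.mul_rpow ha hQ.re_det_nonneg,
    Real.mul_rpow ha (PosSemidef.one.add hQ).re_det_nonneg]
  calc _ = (‖S.det‖ ^ 2) ^ (Fintype.card n : ℝ)⁻¹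
        * (1 + RCLike.re Q.det ^ (Fintype.card n : ℝ)⁻¹) := by ring
    _ ≤ _ := mul_le_mul_of_nonneg_left hQ.one_add_re_det_rpow_le (Real.rpow_nonneg ha _)

theorem PosSemidef.re_det_rpow_add_le [Nonempty n] {M P : Matrix n n 𝕜}
    (hM : M.PosSemidef) (hP : P.PosSemidef) :
    RCLike.re M.det ^ (Fintype.card n : ℝ)⁻¹ + RCLike.re P.det ^ (Fintype.card n : ℝ)⁻¹
      ≤ RCLike.re (M + P).det ^ (Fintype.card n : ℝ)⁻¹ := by
  by_cases hP0 : P.det = 0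
  · by_cases hM0 : M.det = 0
    · simp only [hM0, hP0, map_zero, Real.zero_rpow (by positivity : (Fintype.card n : ℝ)⁻¹ ≠ 0),
        add_zero]
      exact Real.rpow_nonneg (hM.add hP).re_det_nonneg _
    · rw [add_comm, add_comm M]
      exact hP.re_det_rpow_add_le_of_posDef (hM.posDef_iff_det_ne_zero.mpr hM0)
  · exact hM.re_det_rpow_add_le_of_posDef (hP.posDef_iff_det_ne_zero.mpr hP0)

theorem sum_re_det_rpow_le [Nonempty n] {ι : Type*} (s : Finset ι)
    {M : ι → Matrix n n 𝕜} (hM : ∀ i ∈ s, (M i).PosSemidef) :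
    ∑ i ∈ s, RCLike.re (M i).det ^ (Fintype.card n : ℝ)⁻¹
      ≤ RCLike.re (∑ i ∈ s, M i).det ^ (Fintype.card n : ℝ)⁻¹ := by
  classical
  induction s using Finset.induction_on with
  | empty => exact Real.rpow_nonneg PosSemidef.zero.re_det_nonneg _
  | insert a s ha ih =>
    rw [sum_insert ha, sum_insert ha]
    have hs : ∀ i ∈ s, (M i).PosSemidef := fun i hi => hM i (mem_insert_of_mem hi)
    calc _ ≤ RCLike.re (M a).det ^ (Fintype.card n : ℝ)⁻¹
          + RCLike.re (∑ i ∈ s, M i).det ^ (Fintype.card n : ℝ)⁻¹ := by gcongr; exact ih hs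
      _ ≤ _ := (hM a (mem_insert_self a s)).re_det_rpow_add_le (posSemidef_sum s hs)

theorem pow_card_mul_le_det_sum [Nonempty n] {ι : Type*} (s : Finset ι)
    {M : ι → Matrix n n 𝕜} (hM : ∀ i ∈ s, (M i).PosSemidef) {c : ι → 𝕜} (hc : ∀ i ∈ s, 0 ≤ c i)
    {d : 𝕜} (hd : 0 ≤ d) (hdet : ∀ i ∈ s, (M i).det = c i ^ Fintype.card n * d) :
    (∑ i ∈ s, c i) ^ Fintype.card n * d ≤ (∑ i ∈ s, M i).det := by
  set k := Fintype.card n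
  have hk : k ≠ 0 := Fintype.card_ne_zero
  have hre : ∀ z : 𝕜, 0 ≤ z → (RCLike.re z : 𝕜) = z := fun z hz => by
    obtain ⟨x, -, rfl⟩ := RCLike.nonneg_iff_exists_ofReal.mp hz
    rw [RCLike.ofReal_re]
  have hc' : ∀ i ∈ s, 0 ≤ RCLike.re (c i) := fun i hi => (RCLike.nonneg_iff.mp (hc i hi)).1
  have hd' : 0 ≤ RCLike.re d := (RCLike.nonneg_iff.mp hd).1
  have hdet' : ∀ i ∈ s, RCLike.re (M i).det = RCLike.re (c i) ^ k * RCLike.re d := fun i hi => by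
    rw [hdet i hi, ← hre _ (hc i hi), ← hre d hd]
    norm_cast
  have hsum := posSemidef_sum s hM
  rw [← hre _ hsum.det_nonneg, ← hre d hd, ← sum_congr rfl fun i hi => hre (c i) (hc i hi)]
  norm_cast
  have hcs := sum_nonneg hc'
  rw [← Real.rpow_le_rpow_iff (mul_nonneg (pow_nonneg hcs k) hd') hsum.re_det_nonneg
    (by positivity : (0 : ℝ) < (k : ℝ)⁻¹)]
  calc ((∑ i ∈ s, RCLike.re (c i)) ^ k * RCLike.re d) ^ (k : ℝ)⁻¹
      = ∑ i ∈ s, (RCLike.re (c i) ^ k * RCLike.re d) ^ (k : ℝ)⁻¹ := by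
        rw [Real.mul_rpow (pow_nonneg hcs k) hd', Real.pow_rpow_inv_natCast hcs hk, sum_mul]
        refine sum_congr rfl fun i hi => ?_
        rw [Real.mul_rpow (pow_nonneg (hc' i hi) k) hd', Real.pow_rpow_inv_natCast (hc' i hi) hk]
    _ = ∑ i ∈ s, RCLike.re (M i).det ^ (k : ℝ)⁻¹ := sum_congr rfl fun i hi => by rw [hdet' i hi]
    _ ≤ _ := sum_re_det_rpow_le s hM

theorem IsHermitian.eq_sum_eigenvalues_smul_vecMulVec {A : Matrix n n 𝕜} (hA : A.IsHermitian) :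
    A = ∑ i, (hA.eigenvalues i : 𝕜) •
      vecMulVec ⇑(hA.eigenvectorBasis i) (star ⇑(hA.eigenvectorBasis i)) := by
  ext s t
  conv_lhs => rw [hA.spectral_theorem, Unitary.conjStarAlgAut_apply]
  rw [mul_apply, sum_apply]
  refine sum_congr rfl fun i _ => ?_
  simp only [mul_diagonal, smul_apply, vecMulVec_apply, Function.comp_apply, star_apply,
    Pi.star_apply, RCLike.star_def, IsHermitian.eigenvectorUnitary_apply, smul_eq_mul]
  ring

theorem PosSemidef.exists_eq_sum_vecMulVec_self_star {A : Matrix n n 𝕜} (hA : A.PosSemidef) :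
    ∃ u : n → n → 𝕜, A = ∑ i, vecMulVec (u i) (star (u i)) := by
  refine ⟨fun i => (√(hA.1.eigenvalues i) : 𝕜) • ⇑(hA.1.eigenvectorBasis i), ?_⟩
  simp_rw [← ofReal_smul_vecMulVec_self_star (hA.eigenvalues_nonneg _)]
  exact hA.1.eq_sum_eigenvalues_smul_vecMulVec

theorem PosSemidef.exists_eq_vecMulVec_self_star_of_rank_eq_one {A : Matrix n n 𝕜}
    (hA : A.PosSemidef) (h : A.rank = 1) : ∃ u : n → 𝕜, A = vecMulVec u (star u) := by
  rw [hA.1.rank_eq_card_non_zero_eigs, Fintype.card_eq_one_iff] at h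
  obtain ⟨⟨i, _⟩, hi⟩ := h
  refine ⟨(√(hA.1.eigenvalues i) : 𝕜) • ⇑(hA.1.eigenvectorBasis i), ?_⟩
  rw [← ofReal_smul_vecMulVec_self_star (hA.eigenvalues_nonneg _)]
  conv_lhs => rw [hA.1.eq_sum_eigenvalues_smul_vecMulVec]
  refine sum_eq_single i (fun j _ hj => ?_) (by simp)
  have hj0 : hA.1.eigenvalues j = 0 := by
    by_contra hj0
    exact hj (congrArg Subtype.val (hi ⟨j, hj0⟩))
  simp [hj0]

-- `Fin` subtraction is modular; the guard `m ≤ j` makes `j - m` the true difference.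
def lowerToeplitz {R : Type*} [Zero R] {N : ℕ} (v : Fin N → R) : Matrix (Fin N) (Fin N) R :=
  of fun j m => if m ≤ j then v (j - m) else 0

theorem det_lowerToeplitz {R : Type*} [CommRing R] {N : ℕ} [NeZero N] (v : Fin N → R) :
    (lowerToeplitz v).det = v 0 ^ N := by
  have hT : (lowerToeplitz v).IsLowerTriangular := fun i j (hij : i < j) =>
    if_neg (not_le.mpr hij)
  rw [det_of_isLowerTriangular _ hT]
  simp [lowerToeplitz]

end Matrix

open Matrix

theorem Finset.sum_Iic_eq_sum_ite {α M : Type*} [Preorder α] [LocallyFiniteOrderBot α]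
    [Fintype α] [AddCommMonoid M] (j : α) [DecidablePred (· ≤ j)] (f : α → M) :
    ∑ m ∈ Iic j, f m = ∑ m, if m ≤ j then f m else 0 := by
  rw [← sum_filter, filter_ge_eq_Iic]

theorem jury_sum_right {N : ℕ} {ι : Type*} (A : Matrix (Fin N) (Fin N) ℂ) (s : Finset ι)
    (B : ι → Matrix (Fin N) (Fin N) ℂ) : jury A (∑ i ∈ s, B i) = ∑ i ∈ s, jury A (B i) := by
  ext j k
  simp only [jury, of_apply, Matrix.sum_apply, mul_sum]
  exact (sum_congr rfl fun m _ => sum_comm).trans sum_comm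

theorem jury_vecMulVec {N : ℕ} (A : Matrix (Fin N) (Fin N) ℂ) (u w : Fin N → ℂ) :
    jury A (vecMulVec u (star w)) = lowerToeplitz u * A * (lowerToeplitz w)ᴴ := by
  ext j k
  simp only [jury, of_apply, mul_apply, conjTranspose_apply, lowerToeplitz, vecMulVec_apply,
    sum_mul]
  rw [sum_comm]
  simp only [sum_Iic_eq_sum_ite]
  refine sum_congr rfl fun n _ => ?_
  split_ifs
  · refine sum_congr rfl fun m _ => ?_
    split_ifs
    · rw [Pi.star_apply]
      ring
    · simp
  · simp

theorem det_jury_vecMulVec_self_star {N : ℕ} [NeZero N] (A : Matrix (Fin N) (Fin N) ℂ)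
    (u : Fin N → ℂ) : (jury A (vecMulVec u (star u))).det = (u 0 * star (u 0)) ^ N * A.det := by
  rw [jury_vecMulVec, det_mul, det_mul, det_conjTranspose, det_lowerToeplitz, star_pow]
  ring

theorem Matrix.PosSemidef.jury_vecMulVec_self_star {N : ℕ} {A : Matrix (Fin N) (Fin N) ℂ}
    (hA : A.PosSemidef) (u : Fin N → ℂ) : (jury A (vecMulVec u (star u))).PosSemidef := by
  rw [jury_vecMulVec]
  exact hA.mul_mul_conjTranspose_same _

/-- For positive semidefinite `A, B ∈ ℂ^{N×N}`, `det (A ⋄ B) ≥ b₀₀^N det A`;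
moreover, equality holds if `B` has rank `1`. -/
theorem jury_det_ge_and_rank_one_eq {N : ℕ} [NeZero N] (A B : Matrix (Fin N) (Fin N) ℂ)
    (hA : A.PosSemidef) (hB : B.PosSemidef) :
    B 0 0 ^ N * A.det ≤ (jury A B).det ∧
      (B.rank = 1 → (jury A B).det = B 0 0 ^ N * A.det) := by
  constructor
  · obtain ⟨u, rfl⟩ := hB.exists_eq_sum_vecMulVec_self_star
    have hB00 : (∑ r, vecMulVec (u r) (star (u r))) 0 0 = ∑ r, u r 0 * star (u r 0) := by
      simp [Matrix.sum_apply, vecMulVec_apply]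
    rw [hB00, jury_sum_right]
    simpa using pow_card_mul_le_det_sum univ (fun r _ => hA.jury_vecMulVec_self_star (u r))
      (fun r _ => mul_star_self_nonneg (u r 0)) hA.det_nonneg
      (fun r _ => by rw [det_jury_vecMulVec_self_star, Fintype.card_fin])
  · intro hrank
    obtain ⟨u, rfl⟩ := hB.exists_eq_vecMulVec_self_star_of_rank_eq_one hrank
    rw [det_jury_vecMulVec_self_star, vecMulVec_apply, Pi.star_apply]
end

section
/- Let N ≥ 2 and let A = (a_{jk}) and B = (b_{jk}) be positive definite N×N complex matrices. Then det((A ⋄ B)_{N−1}) ≥ ( a_{00} · det(B_{N−1})/det(B_{N−2}) + b_{00} · det(A_{N−1})/det(A_{N−2}) ) · det((A ⋄ B)_{N−2}), where ⋄ denotes the Jury product, M_n denotes the leading principal (n+1)×(n+1) submatrix of a matrix M, and (A ⋄ B)_{N−1} = A ⋄ B. -/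
open Finset Matrix ComplexOrder

/-- `leadDet A n` is the determinant of the leading principal `(n+1) × (n+1)`
submatrix `A_n = (a_{jk})_{j,k=0}^{n}` of `A` (junk value `0` if `n ≥ N`). -/
noncomputable def leadDet {N : ℕ} (A : Matrix (Fin N) (Fin N) ℂ) (n : ℕ) : ℂ :=
  if h : n < N then
    (A.submatrix (Fin.castLE h) (Fin.castLE h) : Matrix (Fin (n + 1)) (Fin (n + 1)) ℂ).det
  else 0

/-!
Let `E = e_{N-1} e_{N-1}ᴴ`. The number `α = det A_{N-1} / det A_{N-2}` equals `1 / (A⁻¹)_{N-1,N-1}`,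
and `A - α E = Pᴴ A P` with `P = 1 - α A⁻¹ E`, so `A₀ = A - α E` is positive semidefinite;
likewise `B₀ = B - β E`. The Jury product is the compression `Sᴴ (A ⊗ B) S` of the Kronecker
product by the `0/1` matrix `S` with `S_{(m,m'),j} = [m + m' = j]`, so it is bilinear and preserves
positive semidefiniteness; moreover `E ⋄ M = m₀₀ E` and `E ⋄ E = 0`. Hence
`A ⋄ B = A₀ ⋄ B₀ + (α b₀₀ + a₀₀ β) E`, and expanding along the last row,
`det (A ⋄ B) = det (A₀ ⋄ B₀) + (α b₀₀ + a₀₀ β) det (A ⋄ B)_{N-2}` with `det (A₀ ⋄ B₀) ≥ 0`.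
-/

open scoped Kronecker

namespace Fin

variable {N : ℕ} {M : Type*} [AddCommMonoid M]

theorem val_add_val_eq_iff {m m' j : Fin N} : (m : ℕ) + m' = j ↔ m ≤ j ∧ m' = j - m := by
  constructor
  · intro h
    have hmj : m ≤ j := Fin.le_def.2 (by omega)
    exact ⟨hmj, Fin.ext (by rw [Fin.coe_sub_iff_le.2 hmj]; omega)⟩
  · rintro ⟨hmj, rfl⟩
    have := Fin.le_def.1 hmj
    rw [Fin.coe_sub_iff_le.2 hmj]
    omega

theorem sum_ite_val_add_val_eq (j : Fin N) (f : Fin N × Fin N → M) :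
    ∑ p : Fin N × Fin N, (if (p.1 : ℕ) + p.2 = j then f p else 0) = ∑ m ∈ Iic j, f (m, j - m) := by
  simp only [Fintype.sum_prod_type, val_add_val_eq_iff, and_comm (a := _ ≤ j), ite_and,
    Finset.sum_ite_eq', Finset.mem_univ, if_true]
  rw [← Finset.sum_filter]
  congr 1
  ext
  simp

theorem sum_Iic_sub_comm (j : Fin N) (f : Fin N × Fin N → M) :
    ∑ m ∈ Iic j, f (m, j - m) = ∑ m ∈ Iic j, f (j - m, m) := by
  rw [← sum_ite_val_add_val_eq, ← sum_ite_val_add_val_eq j fun p => f (p.2, p.1)]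
  exact Fintype.sum_equiv (Equiv.prodComm _ _) _ _ fun p => by simp [add_comm]

end Fin

namespace Matrix

theorem adjugate_last_last {R : Type*} [CommRing R] {n : ℕ}
    (A : Matrix (Fin (n + 1)) (Fin (n + 1)) R) :
    adjugate A (Fin.last n) (Fin.last n) = (A.submatrix Fin.castSucc Fin.castSucc).det := by
  simp [adjugate_fin_succ_eq_det_submatrix, ← two_mul]

theorem det_add_single_self {ι R : Type*} [Fintype ι] [DecidableEq ι] [CommRing R]
    (A : Matrix ι ι R) (i : ι) (c : R) :
    (A + single i i c).det = A.det + c * adjugate A i i := by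
  have hrow : A + single i i c = A.updateRow i (A i + c • Pi.single i 1) := by
    ext j k
    rcases eq_or_ne j i with rfl | hj
    · simp [single_apply, Pi.single_apply, eq_comm]
    · simp [hj, Ne.symm hj]
  rw [hrow, det_updateRow_add, updateRow_eq_self, det_updateRow_smul, adjugate_apply]

theorem submatrix_castSucc_add_single_last {R : Type*} [AddZeroClass R] {n : ℕ}
    (A : Matrix (Fin (n + 1)) (Fin (n + 1)) R) (c : R) :
    (A + single (Fin.last n) (Fin.last n) c).submatrix Fin.castSucc Fin.castSucc =
      A.submatrix Fin.castSucc Fin.castSucc := by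
  ext i j
  simp [(Fin.castSucc_lt_last i).ne']

variable {𝕜 : Type*} [RCLike 𝕜]

theorem PosDef.posSemidef_sub_single_inv_apply {ι : Type*} [Fintype ι] [DecidableEq ι]
    {M : Matrix ι ι 𝕜} (hM : M.PosDef) (i : ι) :
    (M - single i i (M⁻¹ i i)⁻¹).PosSemidef := by
  set c := (M⁻¹ i i)⁻¹
  set E : Matrix ι ι 𝕜 := single i i 1
  have hc : star c = c := IsSelfAdjoint.of_nonneg (inv_nonneg.2 hM.inv.diag_pos.le)
  have hc_mul : c * M⁻¹ i i = 1 := inv_mul_cancel₀ hM.inv.diag_pos.ne'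
  have hdet := (isUnit_iff_isUnit_det M).mp hM.isUnit
  have hE : E * (M⁻¹ * E) = M⁻¹ i i • E := by simp [E, ← Matrix.mul_assoc]
  have hP : (1 - c • (M⁻¹ * E))ᴴ = 1 - c • (E * M⁻¹) := by
    simp [conjTranspose_sub, conjTranspose_smul, hc, E, hM.inv.1.eq]
  have hconj : (1 - c • (M⁻¹ * E))ᴴ * M * (1 - c • (M⁻¹ * E)) = M - c • E := by
    rw [hP]
    simp only [sub_mul, mul_sub, one_mul, mul_one, smul_mul_assoc, mul_smul_comm,
      Matrix.mul_assoc, nonsing_inv_mul M hdet, mul_nonsing_inv_cancel_left M _ hdet, hE,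
      smul_smul, hc_mul, one_smul, sub_self, smul_zero, sub_zero]
  rw [show single i i c = c • E by simp [E], ← hconj]
  exact hM.posSemidef.conjTranspose_mul_mul_same _

theorem PosDef.posSemidef_sub_single_last {n : ℕ} {A : Matrix (Fin (n + 1)) (Fin (n + 1)) 𝕜}
    (hA : A.PosDef) :
    (A - single (Fin.last n) (Fin.last n)
      (A.det / (A.submatrix Fin.castSucc Fin.castSucc).det)).PosSemidef := by
  have hinv : A⁻¹ (Fin.last n) (Fin.last n) =
      (A.submatrix Fin.castSucc Fin.castSucc).det / A.det := by
    rw [inv_def, smul_apply, adjugate_last_last, Ring.inverse_eq_inv', smul_eq_mul, inv_mul_eq_div]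
  simpa [hinv] using hA.posSemidef_sub_single_inv_apply (Fin.last n)

end Matrix

def juryCompression (N : ℕ) : Matrix (Fin N × Fin N) (Fin N) ℂ :=
  of fun p j => if (p.1 : ℕ) + p.2 = j then 1 else 0

section Jury

variable {N : ℕ}

theorem jury_eq_conjTranspose_mul_kronecker_mul (A B : Matrix (Fin N) (Fin N) ℂ) :
    jury A B = (juryCompression N)ᴴ * (A ⊗ₖ B) * juryCompression N := by
  ext j k
  simp only [jury, of_apply, juryCompression, mul_apply, conjTranspose_apply, RCLike.star_def,
    MonoidWithZeroHom.map_ite_one_zero, kroneckerMap_apply, ite_mul, one_mul, zero_mul, mul_ite,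
    mul_one, mul_zero, Fin.sum_ite_val_add_val_eq]
  exact Finset.sum_comm

theorem jury_add_left (A A' B : Matrix (Fin N) (Fin N) ℂ) :
    jury (A + A') B = jury A B + jury A' B := by
  simp only [jury_eq_conjTranspose_mul_kronecker_mul, add_kronecker, Matrix.mul_add,
    Matrix.add_mul]

theorem jury_add_right (A B B' : Matrix (Fin N) (Fin N) ℂ) :
    jury A (B + B') = jury A B + jury A B' := by
  simp only [jury_eq_conjTranspose_mul_kronecker_mul, kronecker_add, Matrix.mul_add,
    Matrix.add_mul]

theorem jury_comm (A B : Matrix (Fin N) (Fin N) ℂ) : jury A B = jury B A := by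
  ext j k
  refine (Fin.sum_Iic_sub_comm j fun p => ∑ n ∈ Iic k, A p.1 n * B p.2 (k - n)).trans ?_
  refine sum_congr rfl fun m _ =>
    (Fin.sum_Iic_sub_comm k fun p => A (j - m) p.1 * B m p.2).trans ?_
  exact sum_congr rfl fun n _ => mul_comm _ _

theorem Matrix.PosSemidef.jury {A B : Matrix (Fin N) (Fin N) ℂ} (hA : A.PosSemidef)
    (hB : B.PosSemidef) : (jury A B).PosSemidef := by
  rw [jury_eq_conjTranspose_mul_kronecker_mul]
  exact (hA.kronecker hB).conjTranspose_mul_mul_same _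

end Jury

theorem jury_single_last_left {n : ℕ} (c : ℂ) (M : Matrix (Fin (n + 1)) (Fin (n + 1)) ℂ) :
    jury (single (Fin.last n) (Fin.last n) c) M = single (Fin.last n) (Fin.last n) (c * M 0 0) := by
  ext j k
  simp only [jury, of_apply, single_apply, ite_and, ite_mul, zero_mul]
  rcases eq_or_ne j (Fin.last n) with rfl | hj <;> rcases eq_or_ne k (Fin.last n) with rfl | hk <;>
    simp [*, Ne.symm]

theorem jury_add_single_last {n : ℕ} (A B : Matrix (Fin (n + 2)) (Fin (n + 2)) ℂ) (α β : ℂ) :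
    jury (A + single (Fin.last (n + 1)) (Fin.last (n + 1)) α)
        (B + single (Fin.last (n + 1)) (Fin.last (n + 1)) β) =
      jury A B + single (Fin.last (n + 1)) (Fin.last (n + 1)) (α * B 0 0 + A 0 0 * β) := by
  have h0 : single (Fin.last (n + 1)) (Fin.last (n + 1)) β 0 0 = 0 := by
    simp [Fin.last_pos.ne']
  rw [jury_add_left, jury_add_right, jury_add_right, jury_comm A (single _ _ β),
    jury_single_last_left, jury_single_last_left, jury_single_last_left]
  simp only [h0, mul_zero, single_zero, add_zero, mul_comm β, single_add]
  abel

theorem leadDet_eq_det {n : ℕ} (M : Matrix (Fin (n + 1)) (Fin (n + 1)) ℂ) : leadDet M n = M.det :=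
  dif_pos n.lt_succ_self

theorem leadDet_eq_det_submatrix_castSucc {n : ℕ} (M : Matrix (Fin (n + 2)) (Fin (n + 2)) ℂ) :
    leadDet M n = (M.submatrix Fin.castSucc Fin.castSucc).det :=
  dif_pos (by omega)

/-- For `N ≥ 2` and positive definite `A, B ∈ ℂ^{N×N}`, setting `C = A ⋄ B`:
`det C_{N-1} ≥ (a₀₀ det B_{N-1}/det B_{N-2} + b₀₀ det A_{N-1}/det A_{N-2}) det C_{N-2}`. -/
theorem jury_det_step {N : ℕ} (hN : 2 ≤ N) (A B : Matrix (Fin N) (Fin N) ℂ)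
    (hA : A.PosDef) (hB : B.PosDef) :
    (A ⟨0, by omega⟩ ⟨0, by omega⟩ * (leadDet B (N - 1) / leadDet B (N - 2))
        + B ⟨0, by omega⟩ ⟨0, by omega⟩ * (leadDet A (N - 1) / leadDet A (N - 2)))
        * leadDet (jury A B) (N - 2)
      ≤ leadDet (jury A B) (N - 1) := by
  obtain ⟨n, rfl⟩ : ∃ n, N = n + 2 := ⟨N - 2, by omega⟩
  rw [show n + 2 - 1 = n + 1 from rfl, show n + 2 - 2 = n from rfl]
  simp only [leadDet_eq_det, leadDet_eq_det_submatrix_castSucc]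
  change (A 0 0 * _ + B 0 0 * _) * _ ≤ _
  set α := A.det / (A.submatrix Fin.castSucc Fin.castSucc).det
  set β := B.det / (B.submatrix Fin.castSucc Fin.castSucc).det
  set E : ℂ → Matrix (Fin (n + 2)) (Fin (n + 2)) ℂ := single (Fin.last (n + 1)) (Fin.last (n + 1))
  have hcorner : ∀ (M : Matrix (Fin (n + 2)) (Fin (n + 2)) ℂ) c, (M - E c) 0 0 = M 0 0 := by
    simp [E, Fin.last_pos.ne']
  have hsplit := jury_add_single_last (A - E α) (B - E β) α β
  rw [sub_add_cancel, sub_add_cancel, hcorner, hcorner] at hsplit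
  have hdet := (hA.posSemidef_sub_single_last.jury hB.posSemidef_sub_single_last).det_nonneg
  rw [hsplit, det_add_single_self, adjugate_last_last, submatrix_castSucc_add_single_last,
    add_comm (α * _), mul_comm α]
  exact le_add_of_nonneg_left hdet
end
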